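/- Exact interval inverse via boundary matrices: Let A_c, Δ ∈ ℝ^{n×n} with Δ ≥ 0 entrywise, and suppose the interval matrix [A_c − Δ, A_c + Δ] is regular, i.e., every real matrix A with |A − A_c| ≤ Δ entrywise is invertible. For sign vectors y, z ∈ {−1,1}^n define A_{yz} = A_c − D_y Δ D_z, where D_y and D_z are the diagonal matrices with diagonals y and z. Then for every pair of indices (i,j): min over all A in the interval matrix of (A^{-1})_{ij} equals min over all y, z ∈ {−1,1}^n of ((A_{yz})^{-1})_{ij}, and max over all A in the interval matrix of (A^{-1})_{ij} equals max over all y, z ∈ {−1,1}^n of ((A_{yz})^{-1})_{ij}. -/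

import Mathlib

/-!
Write `A(t, z) = A_c - D_t Δ D_z` for arbitrary `t, z ∈ [-1, 1]ⁿ`; these matrices lie in the
interval matrix. Given `A` in the interval matrix, let `x` be the `j`-th column of `A⁻¹` and
`z = sign x`. Since `|A_c x - e_j| ≤ Δ |x|` (Oettli–Prager), one can pick `t ∈ [-1, 1]ⁿ` with
`A(t, z) x = e_j`, so `(A⁻¹)_{ij} = (A(t, z)⁻¹)_{ij}`. Changing one coordinate of `t` changes one
row of `A(t, z)` affinely, so by Cramer's rule `(A(t, z)⁻¹)_{ij}` is a linear fractional function
of that coordinate whose denominator `det A(t, z)` never vanishes on `[-1, 1]` by regularity; such a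
function lies between its values at `±1`. Pushing the coordinates of `t` to `±1` one at a time
yields sign vectors `y` with `(A(y, z)⁻¹)_{ij}` below, resp. above, `(A⁻¹)_{ij}`. This comparison
alone identifies the infima and suprema; no compactness is needed.
-/

open Set Matrix

theorem mem_uIcc_of_mul_nonneg {a b x : ℝ} (h : 0 ≤ (x - a) * (b - x)) : x ∈ uIcc a b := by
  rw [mem_uIcc]
  rcases mul_nonneg_iff.mp h with ⟨h₁, h₂⟩ | ⟨h₁, h₂⟩
  · exact Or.inl ⟨by linarith, by linarith⟩
  · exact Or.inr ⟨by linarith, by linarith⟩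

theorem mul_pos_of_affine_ne_zero {d₀ d₁ a b : ℝ} (hab : a ≤ b)
    (hd : ∀ r ∈ Icc a b, d₀ + r * d₁ ≠ 0) : 0 < (d₀ + a * d₁) * (d₀ + b * d₁) := by
  by_contra! hneg
  have hcont : ContinuousOn (fun r => d₀ + r * d₁) (uIcc a b) := by fun_prop
  have hzero : (0 : ℝ) ∈ uIcc (d₀ + a * d₁) (d₀ + b * d₁) := by
    rw [mem_uIcc]
    rcases mul_nonpos_iff.mp hneg with ⟨h₁, h₂⟩ | ⟨h₁, h₂⟩
    · exact Or.inr ⟨h₂, h₁⟩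
    · exact Or.inl ⟨h₁, h₂⟩
  obtain ⟨r, hr, hr0⟩ := intermediate_value_uIcc hcont hzero
  rw [uIcc_of_le hab] at hr
  exact hd r hr hr0

theorem div_affine_mem_uIcc {n₀ n₁ d₀ d₁ a b s : ℝ}
    (hd : ∀ r ∈ Icc a b, d₀ + r * d₁ ≠ 0) (hs : s ∈ Icc a b) :
    (n₀ + s * n₁) / (d₀ + s * d₁) ∈
      uIcc ((n₀ + a * n₁) / (d₀ + a * d₁)) ((n₀ + b * n₁) / (d₀ + b * d₁)) := by
  have hab : a ≤ b := hs.1.trans hs.2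
  have ha := hd a (left_mem_Icc.mpr hab)
  have hb := hd b (right_mem_Icc.mpr hab)
  have hs' := hd s hs
  have hpos := mul_pos_of_affine_ne_zero hab hd
  apply mem_uIcc_of_mul_nonneg
  have key : ((n₀ + s * n₁) / (d₀ + s * d₁) - (n₀ + a * n₁) / (d₀ + a * d₁)) *
      ((n₀ + b * n₁) / (d₀ + b * d₁) - (n₀ + s * n₁) / (d₀ + s * d₁)) =
      (n₀ * d₁ - n₁ * d₀) ^ 2 * ((s - a) * (b - s)) /
        ((d₀ + a * d₁) * (d₀ + b * d₁) * (d₀ + s * d₁) ^ 2) := by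
    rw [div_sub_div _ _ hs' ha, div_sub_div _ _ hb hs', div_mul_div_comm]
    congr 1 <;> ring
  rw [key]
  have : 0 ≤ (s - a) * (b - s) := mul_nonneg (by linarith [hs.1]) (by linarith [hs.2])
  positivity

theorem exists_forall_mem_le_of_update_le {ι α β : Type*} [Fintype ι] [DecidableEq ι]
    [Preorder β] {s V : Set α} (hV : V ⊆ s) {F : (ι → α) → β}
    (hF : ∀ t : ι → α, (∀ m, t m ∈ s) → ∀ k, ∃ e ∈ V, F (Function.update t k e) ≤ F t)
    {t : ι → α} (ht : ∀ m, t m ∈ s) : ∃ y : ι → α, (∀ m, y m ∈ V) ∧ F y ≤ F t := by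
  suffices ∀ S : Finset ι, ∀ t : ι → α, (∀ m, t m ∈ s) → (∀ m ∉ S, t m ∈ V) →
      ∃ y : ι → α, (∀ m, y m ∈ V) ∧ F y ≤ F t from
    this Finset.univ t ht fun m hm => absurd (Finset.mem_univ m) hm
  intro S
  induction S using Finset.induction_on with
  | empty => exact fun t _ htV => ⟨t, fun m => htV m (Finset.notMem_empty m), le_rfl⟩
  | insert k S _ ih =>
    intro t ht htV
    obtain ⟨e, he, hle⟩ := hF t ht k
    have ht' : ∀ m, Function.update t k e m ∈ s := by
      intro m
      rcases eq_or_ne m k with rfl | hm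
      · simpa using hV he
      · simpa [hm] using ht m
    have htV' : ∀ m ∉ S, Function.update t k e m ∈ V := by
      intro m hm
      rcases eq_or_ne m k with rfl | hmk
      · simpa using he
      · simpa [hmk] using htV m (by simp [hm, hmk])
    obtain ⟨y, hy, hyle⟩ := ih _ ht' htV'
    exact ⟨y, hy, hyle.trans hle⟩

section Determinant

variable {ι R : Type*} [Fintype ι] [DecidableEq ι] [CommRing R]

theorem det_updateRow_add_smul (M : Matrix ι ι R) (k : ι) (u v : ι → R) (s : R) :
    (M.updateRow k (u + s • v)).det = (M.updateRow k u).det + s * (M.updateRow k v).det := by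
  rw [det_updateRow_add, det_updateRow_smul]

theorem exists_adjugate_updateRow_add_smul_apply (M : Matrix ι ι R) (k : ι) (u v : ι → R)
    (i j : ι) : ∃ a₀ a₁ : R, ∀ s : R,
      (M.updateRow k (u + s • v)).adjugate i j = a₀ + s * a₁ := by
  simp only [adjugate_apply]
  rcases eq_or_ne k j with rfl | hkj
  · exact ⟨_, 0, fun s => by rw [updateRow_idem, mul_zero, add_zero]⟩
  · exact ⟨_, _, fun s => by rw [updateRow_comm _ hkj, det_updateRow_add_smul]⟩

end Determinant

theorem inv_apply_eq_adjugate_div_det {ι K : Type*} [Fintype ι] [DecidableEq ι] [Field K]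
    (A : Matrix ι ι K) (i j : ι) : A⁻¹ i j = A.adjugate i j / A.det := by
  rw [inv_def, Ring.inverse_eq_inv, Matrix.smul_apply, smul_eq_mul, div_eq_inv_mul]

theorem inv_updateRow_add_smul_apply_mem_uIcc {ι : Type*} [Fintype ι] [DecidableEq ι]
    (M : Matrix ι ι ℝ) (k : ι) (u v : ι → ℝ) (i j : ι) {a b s : ℝ}
    (hM : ∀ r ∈ Icc a b, IsUnit (M.updateRow k (u + r • v))) (hs : s ∈ Icc a b) :
    (M.updateRow k (u + s • v))⁻¹ i j ∈
      uIcc ((M.updateRow k (u + a • v))⁻¹ i j) ((M.updateRow k (u + b • v))⁻¹ i j) := by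
  obtain ⟨a₀, a₁, hadj⟩ := exists_adjugate_updateRow_add_smul_apply M k u v i j
  simp only [inv_apply_eq_adjugate_div_det, hadj, det_updateRow_add_smul]
  refine div_affine_mem_uIcc (fun r hr => ?_) hs
  rw [← det_updateRow_add_smul, ← isUnit_iff_ne_zero, ← isUnit_iff_isUnit_det]
  exact hM r hr

theorem mem_Icc_of_eq_one_or_eq_neg_one {x : ℝ} (h : x = 1 ∨ x = -1) : x ∈ Icc (-1) 1 := by
  rcases h with rfl | rfl <;> norm_num

def intervalMatrix {m n : Type*} (Ac Δ : Matrix m n ℝ) : Set (Matrix m n ℝ) :=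
  {A | ∀ k l, |A k l - Ac k l| ≤ Δ k l}

section IntervalMatrix

variable {ι : Type*} [Fintype ι] {Ac Δ : Matrix ι ι ℝ}

theorem abs_mulVec_sub_mulVec_le {A : Matrix ι ι ℝ} (hA : A ∈ intervalMatrix Ac Δ) (x : ι → ℝ) :
    |Ac *ᵥ x - A *ᵥ x| ≤ Δ *ᵥ |x| := by
  intro k
  rw [← sub_mulVec, Pi.abs_apply]
  refine (Finset.abs_sum_le_sum_abs _ _).trans (Finset.sum_le_sum fun l _ => ?_)
  rw [abs_mul, Pi.abs_apply]
  dsimp only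
  rw [Matrix.sub_apply, abs_sub_comm]
  exact mul_le_mul_of_nonneg_right (hA k l) (abs_nonneg _)

variable [DecidableEq ι]

theorem sub_diagonal_mul_diagonal_apply (Ac Δ : Matrix ι ι ℝ) (y z : ι → ℝ) (k l : ι) :
    (Ac - diagonal y * Δ * diagonal z) k l = Ac k l - y k * Δ k l * z l := by
  simp [mul_diagonal, diagonal_mul]

theorem sub_diagonal_mul_diagonal_mem_intervalMatrix (hΔ : ∀ k l, 0 ≤ Δ k l) {y z : ι → ℝ}
    (hy : ∀ m, y m ∈ Icc (-1) 1) (hz : ∀ m, z m ∈ Icc (-1) 1) :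
    Ac - diagonal y * Δ * diagonal z ∈ intervalMatrix Ac Δ := by
  intro k l
  rw [sub_diagonal_mul_diagonal_apply, sub_sub_cancel_left, abs_neg, abs_mul, abs_mul,
    abs_of_nonneg (hΔ k l)]
  have hyk := abs_le.mpr (hy k)
  have hzl := abs_le.mpr (hz l)
  calc |y k| * Δ k l * |z l| ≤ Δ k l * 1 :=
        mul_le_mul (mul_le_of_le_one_left (hΔ k l) hyk) hzl (abs_nonneg _) (hΔ k l)
    _ = Δ k l := mul_one _

theorem sub_diagonal_update_mul_diagonal (Ac Δ : Matrix ι ι ℝ) (t z : ι → ℝ) (k : ι) (s : ℝ) :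
    Ac - diagonal (Function.update t k s) * Δ * diagonal z =
      (Ac - diagonal t * Δ * diagonal z).updateRow k (Ac k + s • -(Δ k * z)) := by
  ext m l
  rcases eq_or_ne m k with rfl | hm
  · simp [mul_assoc, sub_eq_add_neg]
  · simp [hm]

theorem inv_apply_mem_uIcc_update (hΔ : ∀ k l, 0 ≤ Δ k l)
    (hReg : ∀ A ∈ intervalMatrix Ac Δ, IsUnit A) {t z : ι → ℝ}
    (ht : ∀ m, t m ∈ Icc (-1) 1) (hz : ∀ m, z m ∈ Icc (-1) 1) (k i j : ι) :
    (Ac - diagonal t * Δ * diagonal z)⁻¹ i j ∈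
      uIcc ((Ac - diagonal (Function.update t k (-1)) * Δ * diagonal z)⁻¹ i j)
        ((Ac - diagonal (Function.update t k 1) * Δ * diagonal z)⁻¹ i j) := by
  have hupdate : ∀ r ∈ Icc (-1 : ℝ) 1, ∀ m, Function.update t k r m ∈ Icc (-1) 1 := by
    intro r hr m
    rcases eq_or_ne m k with rfl | hm
    · simpa using hr
    · simpa [hm] using ht m
  have hunit : ∀ r ∈ Icc (-1 : ℝ) 1,
      IsUnit ((Ac - diagonal t * Δ * diagonal z).updateRow k (Ac k + r • -(Δ k * z))) := by
    intro r hr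
    rw [← sub_diagonal_update_mul_diagonal]
    exact hReg _ (sub_diagonal_mul_diagonal_mem_intervalMatrix hΔ (hupdate r hr) hz)
  simpa only [← sub_diagonal_update_mul_diagonal, Function.update_eq_self] using
    inv_updateRow_add_smul_apply_mem_uIcc _ k _ _ i j hunit (ht k)

theorem exists_sign_inv_apply_le (hΔ : ∀ k l, 0 ≤ Δ k l)
    (hReg : ∀ A ∈ intervalMatrix Ac Δ, IsUnit A) {t z : ι → ℝ}
    (ht : ∀ m, t m ∈ Icc (-1) 1) (hz : ∀ m, z m ∈ Icc (-1) 1) (i j : ι) :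
    ∃ y : ι → ℝ, (∀ m, y m = 1 ∨ y m = -1) ∧
      (Ac - diagonal y * Δ * diagonal z)⁻¹ i j ≤ (Ac - diagonal t * Δ * diagonal z)⁻¹ i j := by
  refine exists_forall_mem_le_of_update_le (V := {1, -1}) (by norm_num [insert_subset_iff])
    (fun t ht k => ?_) ht
  rcases mem_uIcc.mp (inv_apply_mem_uIcc_update hΔ hReg ht hz k i j) with h | h
  · exact ⟨-1, by simp, h.1⟩
  · exact ⟨1, by simp, h.1⟩

theorem exists_sign_le_inv_apply (hΔ : ∀ k l, 0 ≤ Δ k l)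
    (hReg : ∀ A ∈ intervalMatrix Ac Δ, IsUnit A) {t z : ι → ℝ}
    (ht : ∀ m, t m ∈ Icc (-1) 1) (hz : ∀ m, z m ∈ Icc (-1) 1) (i j : ι) :
    ∃ y : ι → ℝ, (∀ m, y m = 1 ∨ y m = -1) ∧
      (Ac - diagonal t * Δ * diagonal z)⁻¹ i j ≤ (Ac - diagonal y * Δ * diagonal z)⁻¹ i j := by
  let F : (ι → ℝ) → ℝᵒᵈ := fun t => OrderDual.toDual ((Ac - diagonal t * Δ * diagonal z)⁻¹ i j)
  have hstep : ∀ t : ι → ℝ, (∀ m, t m ∈ Icc (-1) 1) →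
      ∀ k, ∃ e ∈ ({1, -1} : Set ℝ), F (Function.update t k e) ≤ F t := by
    intro t ht k
    rcases mem_uIcc.mp (inv_apply_mem_uIcc_update hΔ hReg ht hz k i j) with h | h
    · exact ⟨1, by simp, OrderDual.toDual_le_toDual.mpr h.2⟩
    · exact ⟨-1, by simp, OrderDual.toDual_le_toDual.mpr h.2⟩
  obtain ⟨y, hy, hle⟩ :=
    exists_forall_mem_le_of_update_le (by norm_num [insert_subset_iff]) hstep ht
  exact ⟨y, hy, OrderDual.toDual_le_toDual.mp hle⟩

theorem sub_diagonal_mul_diagonal_mulVec (Ac Δ : Matrix ι ι ℝ) (t z x : ι → ℝ) :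
    (Ac - diagonal t * Δ * diagonal z) *ᵥ x = Ac *ᵥ x - t * (Δ *ᵥ (z * x)) := by
  ext k
  simp only [mulVec, dotProduct, sub_diagonal_mul_diagonal_apply, Pi.sub_apply, Pi.mul_apply,
    Finset.mul_sum, ← Finset.sum_sub_distrib]
  exact Finset.sum_congr rfl fun l _ => by ring

theorem exists_sub_diagonal_mul_diagonal_mulVec_eq (Ac Δ : Matrix ι ι ℝ) {x b : ι → ℝ}
    (h : |Ac *ᵥ x - b| ≤ Δ *ᵥ |x|) :
    ∃ t z : ι → ℝ, (∀ m, t m ∈ Icc (-1) 1) ∧ (∀ m, z m = 1 ∨ z m = -1) ∧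
      (Ac - diagonal t * Δ * diagonal z) *ᵥ x = b := by
  set ρ := Ac *ᵥ x - b
  set r := Δ *ᵥ |x|
  have hρ : ∀ k, r k = 0 → ρ k = 0 := fun k hk => abs_nonpos_iff.mp (hk ▸ h k)
  -- where `r k = 0` the junk value `ρ k / 0 = 0` is harmless, as then `ρ k = 0`
  refine ⟨ρ / r, fun m => if 0 ≤ x m then 1 else -1, fun k => ?_, fun m => ?_, ?_⟩
  · rw [mem_Icc, ← abs_le, Pi.div_apply, abs_div]
    rcases eq_or_ne (r k) 0 with hk | hk
    · simp [hk]
    · exact div_le_one_of_le₀ ((h k).trans (le_abs_self _)) (abs_nonneg _)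
  · dsimp only
    split_ifs <;> simp
  · have hzx : (fun m => if 0 ≤ x m then 1 else -1) * x = |x| := by
      ext m
      simp only [Pi.mul_apply, Pi.abs_apply]
      split_ifs with hm
      · rw [one_mul, abs_of_nonneg hm]
      · rw [neg_one_mul, abs_of_neg (not_le.mp hm)]
    have hρr : ρ / r * r = ρ := by
      ext k
      rcases eq_or_ne (r k) 0 with hk | hk
      · simp [hk, hρ k hk]
      · exact div_mul_cancel₀ _ hk
    rw [sub_diagonal_mul_diagonal_mulVec, hzx, hρr, sub_sub_cancel]

theorem exists_inv_apply_eq (hΔ : ∀ k l, 0 ≤ Δ k l)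
    (hReg : ∀ A ∈ intervalMatrix Ac Δ, IsUnit A) {A : Matrix ι ι ℝ}
    (hA : A ∈ intervalMatrix Ac Δ) (i j : ι) :
    ∃ t z : ι → ℝ, (∀ m, t m ∈ Icc (-1) 1) ∧ (∀ m, z m = 1 ∨ z m = -1) ∧
      (Ac - diagonal t * Δ * diagonal z)⁻¹ i j = A⁻¹ i j := by
  set x := A⁻¹ *ᵥ Pi.single j 1
  have hAx : A *ᵥ x = Pi.single j 1 := by
    rw [mulVec_mulVec, mul_nonsing_inv _ ((isUnit_iff_isUnit_det A).mp (hReg A hA)), one_mulVec]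
  obtain ⟨t, z, ht, hz, hMx⟩ :=
    exists_sub_diagonal_mul_diagonal_mulVec_eq Ac Δ (hAx ▸ abs_mulVec_sub_mulVec_le hA x)
  have hM := hReg _ (sub_diagonal_mul_diagonal_mem_intervalMatrix hΔ ht
    fun m => mem_Icc_of_eq_one_or_eq_neg_one (hz m))
  have hcol : (Ac - diagonal t * Δ * diagonal z)⁻¹ *ᵥ Pi.single j 1 = x := by
    rw [← hMx, mulVec_mulVec, nonsing_inv_mul _ ((isUnit_iff_isUnit_det _).mp hM), one_mulVec]
  refine ⟨t, z, ht, hz, ?_⟩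
  simpa [x, mulVec_single_one] using congrFun hcol i

theorem exists_sign_inv_apply_le_of_mem (hΔ : ∀ k l, 0 ≤ Δ k l)
    (hReg : ∀ A ∈ intervalMatrix Ac Δ, IsUnit A) {A : Matrix ι ι ℝ}
    (hA : A ∈ intervalMatrix Ac Δ) (i j : ι) :
    ∃ y z : ι → ℝ, (∀ m, y m = 1 ∨ y m = -1) ∧ (∀ m, z m = 1 ∨ z m = -1) ∧
      (Ac - diagonal y * Δ * diagonal z)⁻¹ i j ≤ A⁻¹ i j := by
  obtain ⟨t, z, ht, hz, hA⟩ := exists_inv_apply_eq hΔ hReg hA i j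
  obtain ⟨y, hy, hle⟩ := exists_sign_inv_apply_le hΔ hReg ht
    (fun m => mem_Icc_of_eq_one_or_eq_neg_one (hz m)) i j
  exact ⟨y, z, hy, hz, hA ▸ hle⟩

theorem exists_sign_le_inv_apply_of_mem (hΔ : ∀ k l, 0 ≤ Δ k l)
    (hReg : ∀ A ∈ intervalMatrix Ac Δ, IsUnit A) {A : Matrix ι ι ℝ}
    (hA : A ∈ intervalMatrix Ac Δ) (i j : ι) :
    ∃ y z : ι → ℝ, (∀ m, y m = 1 ∨ y m = -1) ∧ (∀ m, z m = 1 ∨ z m = -1) ∧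
      A⁻¹ i j ≤ (Ac - diagonal y * Δ * diagonal z)⁻¹ i j := by
  obtain ⟨t, z, ht, hz, hA⟩ := exists_inv_apply_eq hΔ hReg hA i j
  obtain ⟨y, hy, hle⟩ := exists_sign_le_inv_apply hΔ hReg ht
    (fun m => mem_Icc_of_eq_one_or_eq_neg_one (hz m)) i j
  exact ⟨y, z, hy, hz, hA ▸ hle⟩

end IntervalMatrix

/-- Exact interval inverse via boundary matrices: if the interval matrix
`[A_c - Δ, A_c + Δ]` is regular, then for each entry `(i,j)` the minimum
(resp. maximum) of `(A⁻¹)_{ij}` over the interval matrix is attained on the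
boundary matrices `A_{yz} = A_c - D_y Δ D_z` with `y, z ∈ {±1}ⁿ`. -/
theorem interval_inverse_boundary {n : ℕ} (Ac Δ : Matrix (Fin n) (Fin n) ℝ)
    (hΔ : ∀ i j, 0 ≤ Δ i j)
    (hReg : ∀ A : Matrix (Fin n) (Fin n) ℝ,
      (∀ i j, |A i j - Ac i j| ≤ Δ i j) → IsUnit A) :
    ∀ i j : Fin n,
      sInf {v : ℝ | ∃ A : Matrix (Fin n) (Fin n) ℝ,
          (∀ k l, |A k l - Ac k l| ≤ Δ k l) ∧ v = A⁻¹ i j} =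
        sInf {v : ℝ | ∃ y z : Fin n → ℝ, (∀ k, y k = 1 ∨ y k = -1) ∧
          (∀ k, z k = 1 ∨ z k = -1) ∧
          v = (Ac - Matrix.diagonal y * Δ * Matrix.diagonal z)⁻¹ i j} ∧
      sSup {v : ℝ | ∃ A : Matrix (Fin n) (Fin n) ℝ,
          (∀ k l, |A k l - Ac k l| ≤ Δ k l) ∧ v = A⁻¹ i j} =
        sSup {v : ℝ | ∃ y z : Fin n → ℝ, (∀ k, y k = 1 ∨ y k = -1) ∧
          (∀ k, z k = 1 ∨ z k = -1) ∧
          v = (Ac - Matrix.diagonal y * Δ * Matrix.diagonal z)⁻¹ i j} := by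
  intro i j
  have hvertex : ∀ y z : Fin n → ℝ, (∀ k, y k = 1 ∨ y k = -1) → (∀ k, z k = 1 ∨ z k = -1) →
      Ac - diagonal y * Δ * diagonal z ∈ intervalMatrix Ac Δ := fun y z hy hz =>
    sub_diagonal_mul_diagonal_mem_intervalMatrix hΔ
      (fun m => mem_Icc_of_eq_one_or_eq_neg_one (hy m))
      (fun m => mem_Icc_of_eq_one_or_eq_neg_one (hz m))
  refine ⟨csInf_eq_csInf_of_forall_exists_le ?_ ?_, csSup_eq_csSup_of_forall_exists_le ?_ ?_⟩
  · rintro _ ⟨A, hA, rfl⟩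
    obtain ⟨y, z, hy, hz, hle⟩ := exists_sign_inv_apply_le_of_mem hΔ hReg hA i j
    exact ⟨_, ⟨y, z, hy, hz, rfl⟩, hle⟩
  · rintro _ ⟨y, z, hy, hz, rfl⟩
    exact ⟨_, ⟨_, hvertex y z hy hz, rfl⟩, le_rfl⟩
  · rintro _ ⟨A, hA, rfl⟩
    obtain ⟨y, z, hy, hz, hle⟩ := exists_sign_le_inv_apply_of_mem hΔ hReg hA i j
    exact ⟨_, ⟨y, z, hy, hz, rfl⟩, hle⟩
  · rintro _ ⟨y, z, hy, hz, rfl⟩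
    exact ⟨_, ⟨_, hvertex y z hy hz, rfl⟩, le_rfl⟩
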